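/- arXiv:2405.18138 — 3 statements merged into one kernel-verified Lean document; each statement's English description precedes it below -/
import Mathlib

section
/- For any measurable set E ⊆ ℝ^N with 0 < |E| < ∞, the Fraenkel asymmetry λ(E) is strictly less than 2, and the infimum defining λ(E) is attained at some point x ∈ ℝ^N (a 'Fraenkel ball' exists). -/
open MeasureTheory Metric Set ENNReal

noncomputable section

abbrev En (N : ℕ) := EuclideanSpace ℝ (Fin N)

/-- The volume of the unit ball in `ℝ^N`. -/
def omegaB (N : ℕ) : ℝ := (volume (Metric.ball (0 : En N) 1)).toReal

/-- The divergence of a vector field on `ℝ^N`. -/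
def divg {N : ℕ} (φ : En N → En N) (x : En N) : ℝ :=
  ∑ i, fderiv ℝ φ x (EuclideanSpace.single i (1 : ℝ)) i

/-- The set of candidate values in the sup defining the distributional perimeter of `E`. -/
def perSet {N : ℕ} (E : Set (En N)) : Set ℝ :=
  {p | ∃ φ : En N → En N, ContDiff ℝ 1 φ ∧ HasCompactSupport φ ∧
    (∀ x, ‖φ x‖ ≤ 1) ∧ p = ∫ x in E, divg φ x}

/-- The distributional (De Giorgi) perimeter of `E`. -/
def perimeter {N : ℕ} (E : Set (En N)) : ℝ := sSup (perSet E)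

/-- `E` has finite perimeter. -/
def HasFinitePerimeter {N : ℕ} (E : Set (En N)) : Prop := BddAbove (perSet E)

/-- The essential diameter of `E`. -/
def essDiam {N : ℕ} (E : Set (En N)) : ℝ≥0∞ :=
  sInf {d : ℝ≥0∞ |
    (volume.prod volume) {p : En N × En N | p.1 ∈ E ∧ p.2 ∈ E ∧ d < edist p.1 p.2} = 0}

/-- The barycenter of `E`. -/
def bary {N : ℕ} (E : Set (En N)) : En N := ((volume E).toReal)⁻¹ • ∫ x in E, x

/-- The radius of the ball having the same volume as `E`. -/
def ballRad {N : ℕ} (E : Set (En N)) : ℝ := ((volume E).toReal / omegaB N) ^ (1 / (N : ℝ))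

/-- The barycentric asymmetry `λ₀(E)`. -/
def lam0 {N : ℕ} (E : Set (En N)) : ℝ :=
  (volume (symmDiff E (Metric.ball (bary E) (ballRad E)))).toReal / (volume E).toReal

/-- The Fraenkel asymmetry `λ(E)`. -/
def fraenkel {N : ℕ} (E : Set (En N)) : ℝ :=
  ⨅ y : En N, (volume (symmDiff E (Metric.ball y (ballRad E)))).toReal / (volume E).toReal

/-- The isoperimetric deficit `δ(E)`. -/
def deficit {N : ℕ} (E : Set (En N)) : ℝ :=
  (perimeter E - perimeter (Metric.ball (0 : En N) (ballRad E))) /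
    perimeter (Metric.ball (0 : En N) (ballRad E))

/-- Measure-theoretic connectedness. -/
def MConnected {N : ℕ} (E : Set (En N)) : Prop :=
  ∀ F : Set (En N), MeasurableSet F → F ⊆ E → 0 < volume F → volume F < volume E →
    perimeter E < perimeter F + perimeter (E \ F)

/-! The ball `B y = ball y (ballRad E)` has the volume of `E`, so `|E ∆ B y| = 2 (|E| - |E ∩ B y|)`
and minimizing the asymmetry amounts to maximizing `g y = |E ∩ B y|`. This function is continuous
(moving the centre from `z` to `y` changes `g` by at most the volume of an annulus of width
`dist y z`), tends to `0` at infinity (the restriction of the volume to `E` is a finite, hence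
tight, measure), and is somewhere positive (that restriction has nonempty support). Hence `g`
attains a positive maximum, which gives both claims. -/

open Filter Topology Bornology Module
open scoped symmDiff

section SymmDiff

variable {α : Type*} [MeasurableSpace α] {μ : Measure α} {s t : Set α}

theorem measureReal_symmDiff_eq_two_mul_sub_inter (hs : MeasurableSet s) (ht : MeasurableSet t)
    (hst : μ s = μ t) (hfin : μ s ≠ ∞) :
    μ.real (s ∆ t) = 2 * (μ.real s - μ.real (s ∩ t)) := by
  have hfin' : μ t ≠ ∞ := hst ▸ hfin
  have hs_split := measureReal_sdiff_add_inter (μ := μ) (s := s) ht hfin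
  have ht_split := measureReal_sdiff_add_inter (μ := μ) (s := t) hs hfin'
  have hst' : μ.real s = μ.real t := congrArg ENNReal.toReal hst
  rw [inter_comm t s] at ht_split
  rw [measureReal_symmDiff_eq hs ht]
  linarith

end SymmDiff

section MetricMeasure

variable {X : Type*} [PseudoMetricSpace X] [MeasurableSpace X]

theorem measureReal_inter_ball_le_add [OpensMeasurableSpace X] [ProperSpace X] {μ : Measure X}
    [IsFiniteMeasureOnCompacts μ] (s : Set X) (y z : X) (r : ℝ) :
    μ.real (s ∩ ball y r) ≤
      μ.real (s ∩ ball z r) + (μ.real (ball z (r + dist y z)) - μ.real (ball z r)) := by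
  have hsub : s ∩ ball y r ⊆ (s ∩ ball z r) ∪ (ball z (r + dist y z) \ ball z r) := by
    rintro x ⟨hxs, hxy⟩
    by_cases hxz : x ∈ ball z r
    · exact Or.inl ⟨hxs, hxz⟩
    · refine Or.inr ⟨?_, hxz⟩
      rw [mem_ball] at hxy ⊢
      linarith [dist_triangle x y z]
  rw [← measureReal_sdiff (ball_subset_ball (by linarith [dist_nonneg (x := y) (y := z)]))
    measurableSet_ball measure_ball_lt_top.ne]
  refine (measureReal_mono hsub ?_).trans (measureReal_union_le _ _)
  exact measure_union_ne_top (measure_ne_top_of_subset inter_subset_right measure_ball_lt_top.ne)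
    (measure_ne_top_of_subset sdiff_subset measure_ball_lt_top.ne)

theorem exists_pos_measure_inter_ball [OpensMeasurableSpace X] [HereditarilyLindelofSpace X]
    {μ : Measure X} {s : Set X} (hs : 0 < μ s) {r : ℝ} (hr : 0 < r) :
    ∃ x, 0 < μ (s ∩ ball x r) := by
  obtain ⟨x, hx⟩ := Measure.nonempty_support (μ := μ.restrict s)
    (by rwa [← Measure.measure_univ_pos, Measure.restrict_apply_univ])
  refine ⟨x, ?_⟩
  have := (Measure.mem_support_iff_forall x).1 hx _ (ball_mem_nhds x hr)
  rwa [Measure.restrict_apply measurableSet_ball, inter_comm] at this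

theorem tendsto_measure_ball_cobounded [ProperSpace X] [BorelSpace X] (ν : Measure X)
    [IsFiniteMeasure ν] (r : ℝ) : Tendsto (fun y => ν (ball y r)) (cobounded X) (𝓝 0) := by
  have htight : Tendsto ν (cobounded X).smallSets (𝓝 0) := by
    simpa [IsTightMeasureSet, cobounded_eq_cocompact] using
      (isTightMeasureSet_singleton : IsTightMeasureSet {ν})
  refine htight.comp (tendsto_smallSets_iff.2 fun t ht => ?_)
  have hbdd : IsBounded (thickening r tᶜ) := (isBounded_compl_iff.2 ht).thickening
  filter_upwards [isBounded_def.1 hbdd] with y hy x hx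
  by_contra hxt
  exact hy (mem_thickening_iff.2 ⟨x, hxt, by rwa [dist_comm, ← mem_ball]⟩)

end MetricMeasure

section AddHaar

variable {V : Type*} [NormedAddCommGroup V] [NormedSpace ℝ V] [FiniteDimensional ℝ V]
  [MeasurableSpace V] [BorelSpace V] (μ : Measure V) [μ.IsAddHaarMeasure]

theorem addHaar_real_ball_of_pos (x : V) {r : ℝ} (hr : 0 < r) :
    μ.real (ball x r) = r ^ finrank ℝ V * μ.real (ball 0 1) := by
  rw [measureReal_def, Measure.addHaar_ball_of_pos μ x hr, ENNReal.toReal_mul,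
    ENNReal.toReal_ofReal (by positivity), measureReal_def]

theorem continuous_measureReal_inter_ball (s : Set V) {r : ℝ} (hr : 0 < r) :
    Continuous fun y => μ.real (s ∩ ball y r) := by
  set n := finrank ℝ V
  set c := μ.real (ball (0 : V) 1)
  have hbound (y z : V) :
      μ.real (s ∩ ball y r) ≤ μ.real (s ∩ ball z r) + ((r + dist y z) ^ n - r ^ n) * c := by
    have := measureReal_inter_ball_le_add (μ := μ) s y z r
    rwa [addHaar_real_ball_of_pos μ z hr, addHaar_real_ball_of_pos μ z (by positivity),
      ← sub_mul] at this
  refine continuous_iff_continuousAt.2 fun z => ?_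
  have hlim : Tendsto (fun y => ((r + dist y z) ^ n - r ^ n) * c) (𝓝 z) (𝓝 0) :=
    Continuous.tendsto' (by fun_prop) z 0 (by simp)
  refine tendsto_iff_dist_tendsto_zero.2 (squeeze_zero (fun _ => dist_nonneg) (fun y => ?_) hlim)
  have hzy := hbound z y
  rw [dist_comm] at hzy
  rw [Real.dist_eq, abs_sub_le_iff]
  constructor <;> linarith [hbound y z]

theorem exists_forall_measureReal_inter_ball_le {s : Set V} (hs0 : 0 < μ s) (hs : μ s ≠ ∞)
    {r : ℝ} (hr : 0 < r) :
    ∃ x, 0 < μ.real (s ∩ ball x r) ∧ ∀ y, μ.real (s ∩ ball y r) ≤ μ.real (s ∩ ball x r) := by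
  obtain ⟨x₀, hx₀⟩ := exists_pos_measure_inter_ball hs0 hr
  have hx₀_real : 0 < μ.real (s ∩ ball x₀ r) :=
    ENNReal.toReal_pos hx₀.ne' (measure_ne_top_of_subset inter_subset_left hs)
  have : IsFiniteMeasure (μ.restrict s) := isFiniteMeasure_restrict.2 hs
  have hdecay : Tendsto (fun y => μ.real (s ∩ ball y r)) (cocompact V) (𝓝 0) := by
    have := (ENNReal.tendsto_toReal ENNReal.zero_ne_top).comp
      (tendsto_measure_ball_cobounded (μ.restrict s) r)
    rw [cobounded_eq_cocompact] at this
    simpa [Function.comp_def, Measure.restrict_apply measurableSet_ball, inter_comm,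
      measureReal_def] using this
  obtain ⟨x, hx⟩ := (continuous_measureReal_inter_ball μ s hr).exists_forall_ge' x₀
    (hdecay.eventually (ge_mem_nhds hx₀_real))
  exact ⟨x, hx₀_real.trans_le (hx x₀), hx⟩

end AddHaar

theorem omegaB_pos (N : ℕ) : 0 < omegaB N :=
  ENNReal.toReal_pos (measure_ball_pos _ _ one_pos).ne' measure_ball_lt_top.ne

theorem ballRad_pos {N : ℕ} {E : Set (En N)} (h0 : 0 < volume E) (hfin : volume E ≠ ⊤) :
    0 < ballRad E :=
  Real.rpow_pos_of_pos (div_pos (ENNReal.toReal_pos h0.ne' hfin) (omegaB_pos N)) _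

theorem volume_ball_ballRad {N : ℕ} {E : Set (En N)} (h0 : 0 < volume E) (hfin : volume E ≠ ⊤)
    (y : En N) : volume (ball y (ballRad E)) = volume E := by
  rcases eq_or_ne N 0 with rfl | hN
  · rw [Subsingleton.eq_univ_of_nonempty (nonempty_ball.2 (ballRad_pos h0 hfin)),
      Subsingleton.eq_univ_of_nonempty (nonempty_of_measure_ne_zero h0.ne')]
  · have hω := omegaB_pos N
    have hrN : ballRad E ^ N = (volume E).toReal / omegaB N := by
      rw [ballRad, ← Real.rpow_natCast, ← Real.rpow_mul (by positivity), one_div,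
        inv_mul_cancel₀ (by exact_mod_cast hN), Real.rpow_one]
    rw [Measure.addHaar_ball_of_pos _ _ (ballRad_pos h0 hfin), finrank_euclideanSpace_fin, hrN,
      ← ENNReal.ofReal_toReal (measure_ball_lt_top (x := (0 : En N)) (r := 1)).ne,
      ← ENNReal.ofReal_mul (by positivity), ← omegaB, div_mul_cancel₀ _ hω.ne',
      ENNReal.ofReal_toReal hfin]

/-- The Fraenkel asymmetry is strictly less than `2` and the infimum defining
it is attained (a Fraenkel ball exists). -/
theorem fraenkel_lt_two_and_attained {N : ℕ} (E : Set (En N)) (hmeas : MeasurableSet E)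
    (h0 : 0 < volume E) (hfin : volume E ≠ ⊤) :
    fraenkel E < 2 ∧ ∃ x : En N,
      (volume (symmDiff E (Metric.ball x (ballRad E)))).toReal / (volume E).toReal
        = fraenkel E := by
  set m := (volume E).toReal
  have hm : 0 < m := ENNReal.toReal_pos h0.ne' hfin
  obtain ⟨x, hx_pos, hx_max⟩ :=
    exists_forall_measureReal_inter_ball_le volume h0 hfin (ballRad_pos h0 hfin)
  have hasym (y : En N) : (volume (E ∆ ball y (ballRad E))).toReal / m =
      2 * (m - volume.real (E ∩ ball y (ballRad E))) / m := by
    rw [← measureReal_def, measureReal_symmDiff_eq_two_mul_sub_inter hmeas measurableSet_ball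
      (volume_ball_ballRad h0 hfin y).symm hfin]
    rfl
  have hfr : fraenkel E = (volume (E ∆ ball x (ballRad E))).toReal / m := by
    refine IsLeast.csInf_eq ⟨mem_range_self x, forall_mem_range.2 fun y => ?_⟩
    rw [hasym, hasym]
    exact div_le_div_of_nonneg_right (by linarith [hx_max y]) hm.le
  refine ⟨?_, x, hfr.symm⟩
  rw [hfr, hasym, div_lt_iff₀ hm]
  linarith
end
end

section
/- Let G, H̃ ⊆ ℝ^N be bounded measurable sets with |G| = |H̃| > 0, and suppose that G ∪ H̃ has diameter at most D′. Then |G Δ H̃| ≥ (2|G|/D′) |bar(G) − bar(H̃)|, where bar denotes the barycenter. -/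
open MeasureTheory Metric Set ENNReal

noncomputable section

/-!
Write `m = |G \ H̃| = |H̃ \ G|`. The common part `G ∩ H̃` cancels in `∫_G x - ∫_H̃ x`, which is
therefore `m` times the difference of the averages of `x` over `G \ H̃` and over `H̃ \ G`. These
averages are at distance at most `D'`, since every point of the first set lies within `D'` of the
whole second set and closed balls are convex. Dividing by `|G|` and using `|G Δ H̃| = 2m` gives the
bound.
-/

namespace MeasureTheory

variable {α E : Type*} [MeasurableSpace α] {μ : Measure α}
  [NormedAddCommGroup E] [NormedSpace ℝ E] {f : α → E} {s t : Set α}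

theorem setIntegral_sub_setIntegral_eq_sdiff_sub (hs : MeasurableSet s) (ht : MeasurableSet t)
    (hfs : IntegrableOn f s μ) (hft : IntegrableOn f t μ) :
    ∫ x in s, f x ∂μ - ∫ x in t, f x ∂μ = ∫ x in s \ t, f x ∂μ - ∫ x in t \ s, f x ∂μ := by
  rw [← integral_inter_add_sdiff ht hfs, ← integral_inter_add_sdiff hs hft, Set.inter_comm t s]
  abel

theorem measureReal_mul_dist_setAverage (hst : μ s = μ t) (hs : μ s ≠ ∞) :
    μ.real s * dist (⨍ x in s, f x ∂μ) (⨍ x in t, f x ∂μ)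
      = ‖∫ x in s, f x ∂μ - ∫ x in t, f x ∂μ‖ := by
  have hreal : μ.real t = μ.real s := by rw [measureReal_def, measureReal_def, hst]
  rw [← measure_smul_setAverage f hs, ← measure_smul_setAverage f (hst ▸ hs), hreal, ← smul_sub,
    norm_smul, Real.norm_of_nonneg measureReal_nonneg, dist_eq_norm]

variable [CompleteSpace E]

theorem dist_setAverage_le_of_forall_dist_le {D : ℝ} (hs : MeasurableSet s) (ht : MeasurableSet t)
    (hs0 : μ s ≠ 0) (hs_fin : μ s ≠ ∞) (ht0 : μ t ≠ 0) (ht_fin : μ t ≠ ∞)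
    (hfs : IntegrableOn f s μ) (hft : IntegrableOn f t μ)
    (hD : ∀ x ∈ s, ∀ y ∈ t, dist (f x) (f y) ≤ D) :
    dist (⨍ x in s, f x ∂μ) (⨍ y in t, f y ∂μ) ≤ D := by
  have h_near : ∀ x ∈ s, f x ∈ Metric.closedBall (⨍ y in t, f y ∂μ) D := fun x hx =>
    Metric.mem_closedBall_comm.1 <|
      (convex_closedBall (f x) D).set_average_mem Metric.isClosed_closedBall ht0 ht_fin
        (ae_restrict_of_forall_mem ht fun y hy => Metric.mem_closedBall_comm.1 (hD x hx y hy)) hft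
  exact (convex_closedBall _ D).set_average_mem Metric.isClosed_closedBall hs0 hs_fin
    (ae_restrict_of_forall_mem hs h_near) hfs

theorem norm_setIntegral_sub_setIntegral_le {D : ℝ} (hs : MeasurableSet s) (ht : MeasurableSet t)
    (hst : μ s = μ t) (hs_fin : μ s ≠ ∞) (hfs : IntegrableOn f s μ) (hft : IntegrableOn f t μ)
    (hD : ∀ x ∈ s, ∀ y ∈ t, dist (f x) (f y) ≤ D) :
    ‖∫ x in s, f x ∂μ - ∫ x in t, f x ∂μ‖ ≤ D * μ.real s := by
  rw [← measureReal_mul_dist_setAverage hst hs_fin, mul_comm D]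
  by_cases hs0 : μ s = 0
  · simp [measureReal_def, hs0]
  · have ht0 : μ t ≠ 0 := hst ▸ hs0
    exact mul_le_mul_of_nonneg_left
      (dist_setAverage_le_of_forall_dist_le hs ht hs0 hs_fin ht0 (hst ▸ hs_fin) hfs hft hD)
      measureReal_nonneg

end MeasureTheory

theorem bary_eq_setAverage {N : ℕ} (E : Set (En N)) : bary E = ⨍ x in E, x := by
  rw [bary, setAverage_eq, measureReal_def]

theorem symmDiff_ge_dist_bary_general {N : ℕ} (G Ht : Set (En N))
    (hG : MeasurableSet G) (hHt : MeasurableSet Ht)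
    (hGb : Bornology.IsBounded G) (hHtb : Bornology.IsBounded Ht)
    (h1 : volume G = volume Ht)
    (D' : ℝ) (hD0 : 0 < D') (hD : Metric.diam (G ∪ Ht) ≤ D') :
    2 * (volume G).toReal / D' * dist (bary G) (bary Ht)
      ≤ (volume (symmDiff G Ht)).toReal := by
  have hint : ∀ s : Set (En N), Bornology.IsBounded s → IntegrableOn (fun x => x) s :=
    fun s hs =>
      (continuous_id.continuousOn.integrableOn_compact hs.isCompact_closure).mono_set subset_closure
  have hfin : volume G ≠ ∞ := hGb.measure_lt_top.ne
  have hsdiff : volume (G \ Ht) = volume (Ht \ G) :=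
    measure_sdiff_symm hG.nullMeasurableSet hHt.nullMeasurableSet h1
      (measure_ne_top_of_subset inter_subset_left hfin)
  have hsymm : (volume (symmDiff G Ht)).toReal = 2 * volume.real (G \ Ht) := by
    rw [← measureReal_def, measureReal_symmDiff_eq hG hHt hfin (h1 ▸ hfin),
      measureReal_def (s := Ht \ G), ← hsdiff, ← measureReal_def]
    ring
  have hbary : (volume G).toReal * dist (bary G) (bary Ht) ≤ D' * volume.real (G \ Ht) := by
    rw [bary_eq_setAverage, bary_eq_setAverage, ← measureReal_def,
      measureReal_mul_dist_setAverage h1 hfin,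
      setIntegral_sub_setIntegral_eq_sdiff_sub hG hHt (hint G hGb) (hint Ht hHtb)]
    exact norm_setIntegral_sub_setIntegral_le (hG.diff hHt) (hHt.diff hG) hsdiff
      (measure_ne_top_of_subset sdiff_subset hfin) (hint _ (hGb.subset sdiff_subset))
      (hint _ (hHtb.subset sdiff_subset)) fun x hx y hy =>
        (dist_le_diam_of_mem (hGb.union hHtb) (.inl hx.1) (.inr hy.1)).trans hD
  rw [hsymm]
  calc 2 * (volume G).toReal / D' * dist (bary G) (bary Ht)
      = 2 / D' * ((volume G).toReal * dist (bary G) (bary Ht)) := by ring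
    _ ≤ 2 / D' * (D' * volume.real (G \ Ht)) := by gcongr
    _ = 2 * volume.real (G \ Ht) := by field_simp

/-- If `|G| = |H̃| > 0` and `G ∪ H̃` has diameter at most `D'`, then
`|G Δ H̃| ≥ (2|G|/D') |bar(G) - bar(H̃)|`. -/
theorem symmDiff_ge_dist_bary {N : ℕ} (G Ht : Set (En N))
    (hG : MeasurableSet G) (hHt : MeasurableSet Ht)
    (hGb : Bornology.IsBounded G) (hHtb : Bornology.IsBounded Ht)
    (h1 : volume G = volume Ht) (h0 : 0 < volume G)
    (D' : ℝ) (hD0 : 0 < D') (hD : Metric.diam (G ∪ Ht) ≤ D') :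
    2 * (volume G).toReal / D' * dist (bary G) (bary Ht)
      ≤ (volume (symmDiff G Ht)).toReal :=
  symmDiff_ge_dist_bary_general G Ht hG hHt hGb hHtb h1 D' hD0 hD
end
end

section
/- For every ε ∈ [0, 1/4] and every N ≥ 1, one has (1 + 2ε)^{(N−1)/N} + (1 − 2ε)^{(N−1)/N} ≥ 2 − 2^{3 + 1/N} ((N−1)/N²) ε². -/
/-! With `p = (N-1)/N ∈ [0,1]` and `K = p(1-p)/2 · a^(p-2)`, the function `t ↦ t^p + K t²` is
convex on `[a, ∞)`, its second derivative `p(p-1) t^(p-2) + 2K` being nonnegative there. Its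
tangent line at `t = 1` therefore gives `t^p ≥ 1 + p(t-1) - K(t-1)²` for `t ≥ a`; adding this at
`t = 1 ± 2ε` with `a = 1/2` cancels the linear terms, and `8K = 2^(3+1/N) (N-1)/N²`. -/

open MeasureTheory Metric Set ENNReal

noncomputable section

lemma ConvexOn.add_mul_sub_le_of_hasDerivAt {S : Set ℝ} {f : ℝ → ℝ} {x y f' : ℝ}
    (hfc : ConvexOn ℝ S f) (hx : x ∈ S) (hy : y ∈ S) (hf : HasDerivAt f f' x) :
    f x + f' * (y - x) ≤ f y := by
  rcases lt_trichotomy x y with hxy | rfl | hyx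
  · have := hfc.le_slope_of_hasDerivAt hx hy hxy hf
    rw [slope_def_field, le_div_iff₀ (sub_pos.2 hxy)] at this
    linarith
  · simp
  · have := hfc.slope_le_of_hasDerivAt hy hx hyx hf
    rw [slope_def_field, div_le_iff₀ (sub_pos.2 hyx)] at this
    linarith

lemma convexOn_rpow_add_mul_sq {p a : ℝ} (hp0 : 0 ≤ p) (hp1 : p ≤ 1) (ha : 0 < a) :
    ConvexOn ℝ (Ici a) fun t : ℝ ↦ t ^ p + p * (1 - p) / 2 * a ^ (p - 2) * t ^ 2 := by
  set K := p * (1 - p) / 2 * a ^ (p - 2)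
  have hderiv {t : ℝ} (ht : 0 < t) :
      HasDerivAt (fun t : ℝ ↦ t ^ p + K * t ^ 2) (p * t ^ (p - 1) + K * (2 * t)) t :=
    ((Real.hasDerivAt_rpow_const (Or.inl ht.ne')).fun_add
      ((hasDerivAt_pow 2 t).const_mul K)).congr_deriv (by ring)
  have hderiv2 {t : ℝ} (ht : 0 < t) :
      HasDerivAt (fun t : ℝ ↦ p * t ^ (p - 1) + K * (2 * t))
        (p * (p - 1) * t ^ (p - 2) + 2 * K) t :=
    (((Real.hasDerivAt_rpow_const (Or.inl ht.ne')).const_mul p).fun_add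
      (((hasDerivAt_id t).const_mul 2).const_mul K)).congr_deriv
        (by rw [sub_sub, one_add_one_eq_two]; ring)
  refine convexOn_of_hasDerivWithinAt2_nonneg (convex_Ici a)
    (fun t ht ↦ (hderiv (ha.trans_le ht)).continuousAt.continuousWithinAt)
    (fun t ht ↦ (hderiv (ha.trans (interior_Ici.subset ht))).hasDerivWithinAt)
    (fun t ht ↦ (hderiv2 (ha.trans (interior_Ici.subset ht))).hasDerivWithinAt) fun t ht ↦ ?_
  have hrpow_le : t ^ (p - 2) ≤ a ^ (p - 2) :=
    Real.rpow_le_rpow_of_nonpos ha (interior_Ici.subset ht).le (by linarith)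
  calc (0 : ℝ) ≤ p * (1 - p) * (a ^ (p - 2) - t ^ (p - 2)) :=
        mul_nonneg (mul_nonneg hp0 (sub_nonneg.2 hp1)) (sub_nonneg.2 hrpow_le)
    _ = p * (p - 1) * t ^ (p - 2) + 2 * K := by ring

lemma one_add_mul_sub_sub_le_rpow {p a t : ℝ} (hp0 : 0 ≤ p) (hp1 : p ≤ 1) (ha : 0 < a)
    (ha1 : a ≤ 1) (ht : a ≤ t) :
    1 + p * (t - 1) - p * (1 - p) / 2 * a ^ (p - 2) * (t - 1) ^ 2 ≤ t ^ p := by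
  have htangent := (convexOn_rpow_add_mul_sq hp0 hp1 ha).add_mul_sub_le_of_hasDerivAt
    (mem_Ici.2 ha1) (mem_Ici.2 ht)
    ((Real.hasDerivAt_rpow_const (Or.inl one_ne_zero)).fun_add ((hasDerivAt_pow 2 1).const_mul _))
  simp only [Real.one_rpow, one_pow, mul_one] at htangent
  linear_combination htangent

/-- For `ε ∈ [0,1/4]` and `N ≥ 1`,
`(1+2ε)^{(N-1)/N} + (1-2ε)^{(N-1)/N} ≥ 2 - 2^{3+1/N} ((N-1)/N²) ε²`. -/
theorem two_point_concavity (N : ℕ) (hN : 1 ≤ N) (ε : ℝ) (hε : ε ∈ Icc (0 : ℝ) (1/4)) :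
    2 - (2 : ℝ) ^ (3 + 1 / (N : ℝ)) * (((N : ℝ) - 1) / (N : ℝ) ^ 2) * ε ^ 2
      ≤ (1 + 2 * ε) ^ (((N : ℝ) - 1) / N) + (1 - 2 * ε) ^ (((N : ℝ) - 1) / N) := by
  obtain ⟨hε0, hε1⟩ := hε
  have hN1 : (1 : ℝ) ≤ N := by exact_mod_cast hN
  set p := ((N : ℝ) - 1) / N with hp
  have hp0 : 0 ≤ p := div_nonneg (by linarith) (by linarith)
  have hp1 : p ≤ 1 := div_le_one_of_le₀ (by linarith) (by linarith)
  have hp_compl : 1 - p = 1 / N := by rw [hp]; field_simp; ring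
  have hconst : (2 : ℝ) ^ (3 + 1 / (N : ℝ)) * (((N : ℝ) - 1) / (N : ℝ) ^ 2)
      = 4 * (p * (1 - p) * 2⁻¹ ^ (p - 2)) := by
    rw [Real.inv_rpow zero_le_two, ← Real.rpow_neg zero_le_two,
      show -(p - 2) = 1 + (1 - p) by ring, hp_compl,
      show 3 + 1 / (N : ℝ) = 2 + (1 + 1 / N) by ring, Real.rpow_add two_pos, hp]
    field_simp
    ring
  have hplus := one_add_mul_sub_sub_le_rpow (a := 2⁻¹) (t := 1 + 2 * ε) hp0 hp1
    (by norm_num) (by norm_num) (by linarith)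
  have hminus := one_add_mul_sub_sub_le_rpow (a := 2⁻¹) (t := 1 - 2 * ε) hp0 hp1
    (by norm_num) (by norm_num) (by linarith)
  rw [hconst]
  linear_combination hplus + hminus
end
end
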